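/- arXiv:0808.2059 — 3 statements merged into one kernel-verified Lean document; each statement's English description precedes it below -/
import Mathlib

section
/- Define f(α₁,α₂) = Σ_{i=1}^{2} Σ_{j=1}^{M_i^*} (2j−1+|M_i−M_{i+1}|)·α_{i,j} and S_i(α_i) = Σ_{j=1}^{M_i^*} max(0, 1−α_{i,j}). For r = 0, the infimum of f over the set Õ₂ = {(α₁,α₂) : α_{i,1} ≥ … ≥ α_{i,M_i^*} ≥ 0 for i = 1,2, and S₁(α₁)·S₂(α₂) = 0 (i.e., S₁(α₁)=0 or S₂(α₂)=0)} equals min(M₁·M₂, M₂·M₃) = M₂·min(M₁,M₃). -/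
open Finset

private lemma sum_coef (m : ℕ) (c : ℝ) :
    ∑ j : Fin m, (2 * (j : ℝ) + 1 + c) = m ^ 2 + m * c := by
  rw [Fin.sum_univ_eq_sum_range (fun j => 2 * (j : ℝ) + 1 + c)]
  induction m with
  | zero => simp
  | succ n ih => rw [Finset.sum_range_succ, ih]; push_cast; ring

private lemma coef_total (M N : ℕ) :
    ∑ j : Fin (min M N), (2 * (j : ℝ) + 1 + |(M : ℝ) - N|) = M * N := by
  rw [sum_coef]
  rcases le_total M N with h | h
  · rw [min_eq_left h, abs_of_nonpos (sub_nonpos.mpr (Nat.cast_le.mpr h))]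
    push_cast [h]; ring
  · rw [min_eq_right h, abs_of_nonneg (sub_nonneg.mpr (Nat.cast_le.mpr h))]
    push_cast [h]; ring

private lemma coef_nonneg (M N : ℕ) (j : Fin (min M N)) :
    (0 : ℝ) ≤ 2 * (j : ℝ) + 1 + |(M : ℝ) - N| := by positivity

/-- The maximal diversity gain of the half-duplex multi-hop relay channel:
at `r = 0`, the infimum of `f` over ordered nonnegative exponents with
`S₁ = 0` or `S₂ = 0` equals `M₂ * min(M₁,M₃)`. -/
theorem stmt5 (M1 M2 M3 : ℕ) (h1 : 0 < M1) (h2 : 0 < M2) (h3 : 0 < M3) :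
    sInf {v : ℝ | ∃ (a : Fin (min M1 M2) → ℝ) (b : Fin (min M2 M3) → ℝ),
        Antitone a ∧ Antitone b ∧ (∀ j, 0 ≤ a j) ∧ (∀ j, 0 ≤ b j) ∧
        ((∑ j : Fin (min M1 M2), max 0 (1 - a j)) = 0 ∨ (∑ j : Fin (min M2 M3), max 0 (1 - b j)) = 0) ∧
        v = (∑ j : Fin (min M1 M2), (2 * (j : ℝ) + 1 + |(M1 : ℝ) - M2|) * a j) +
            (∑ j : Fin (min M2 M3), (2 * (j : ℝ) + 1 + |(M2 : ℝ) - M3|) * b j)}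
      = (M2 : ℝ) * min M1 M3 := by
  set S := {v : ℝ | ∃ (a : Fin (min M1 M2) → ℝ) (b : Fin (min M2 M3) → ℝ),
        Antitone a ∧ Antitone b ∧ (∀ j, 0 ≤ a j) ∧ (∀ j, 0 ≤ b j) ∧
        ((∑ j : Fin (min M1 M2), max 0 (1 - a j)) = 0 ∨ (∑ j : Fin (min M2 M3), max 0 (1 - b j)) = 0) ∧
        v = (∑ j : Fin (min M1 M2), (2 * (j : ℝ) + 1 + |(M1 : ℝ) - M2|) * a j) +
            (∑ j : Fin (min M2 M3), (2 * (j : ℝ) + 1 + |(M2 : ℝ) - M3|) * b j)} with hS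
  -- two witnesses
  have hm1 : ((M1 : ℝ) * M2) ∈ S := by
    refine ⟨fun _ => 1, fun _ => 0, antitone_const, antitone_const,
      fun _ => zero_le_one, fun _ => le_refl 0, Or.inl (by simp), ?_⟩
    simp [coef_total M1 M2]
  have hm2 : ((M2 : ℝ) * M3) ∈ S := by
    refine ⟨fun _ => 0, fun _ => 1, antitone_const, antitone_const,
      fun _ => le_refl 0, fun _ => zero_le_one, Or.inr (by simp), ?_⟩
    simp [coef_total M2 M3]
  -- lower bound
  have hlb : ∀ v ∈ S, (M2 : ℝ) * min M1 M3 ≤ v := by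
    rintro v ⟨a, b, _, _, ha0, hb0, hs, rfl⟩
    have key : ∀ (m : ℕ) (c : ℝ) (f : Fin m → ℝ), (∀ j : Fin m, (0:ℝ) ≤ 2 * (j : ℝ) + 1 + c) →
        (∀ j, (1:ℝ) ≤ f j) →
        (∑ j : Fin m, (2 * (j : ℝ) + 1 + c)) ≤ ∑ j : Fin m, (2 * (j : ℝ) + 1 + c) * f j := by
      intro m c f hc hf
      apply Finset.sum_le_sum
      intro j _
      nlinarith [hc j, hf j]
    have nn : ∀ (m : ℕ) (c : ℝ) (f : Fin m → ℝ), (∀ j : Fin m, (0:ℝ) ≤ 2 * (j : ℝ) + 1 + c) →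
        (∀ j, (0:ℝ) ≤ f j) → (0:ℝ) ≤ ∑ j : Fin m, (2 * (j : ℝ) + 1 + c) * f j := by
      intro m c f hc hf
      exact Finset.sum_nonneg fun j _ => mul_nonneg (hc j) (hf j)
    have hmin1 : (M2 : ℝ) * min M1 M3 ≤ (M1 : ℝ) * M2 := by
      have h' : ((min M1 M3 : ℕ) : ℝ) ≤ M1 := by exact_mod_cast min_le_left M1 M3
      nlinarith [Nat.cast_nonneg (α := ℝ) M2]
    have hmin2 : (M2 : ℝ) * min M1 M3 ≤ (M2 : ℝ) * M3 := by
      have h' : ((min M1 M3 : ℕ) : ℝ) ≤ M3 := by exact_mod_cast min_le_right M1 M3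
      nlinarith [Nat.cast_nonneg (α := ℝ) M2]
    rcases hs with hs | hs
    · have ha1 : ∀ j, (1:ℝ) ≤ a j := by
        intro j
        have := (Finset.sum_eq_zero_iff_of_nonneg
          (fun j _ => le_max_left 0 (1 - a j))).mp hs j (Finset.mem_univ j)
        have h' : 1 - a j ≤ 0 := by
          by_contra h'
          push_neg at h'
          rw [max_eq_right h'.le] at this
          linarith
        linarith
      calc (M2 : ℝ) * min M1 M3 ≤ (M1 : ℝ) * M2 := hmin1
        _ = ∑ j : Fin (min M1 M2), (2 * (j : ℝ) + 1 + |(M1 : ℝ) - M2|) := (coef_total M1 M2).symm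
        _ ≤ ∑ j : Fin (min M1 M2), (2 * (j : ℝ) + 1 + |(M1 : ℝ) - M2|) * a j :=
          key _ _ a (coef_nonneg M1 M2) ha1
        _ ≤ _ := le_add_of_nonneg_right (nn _ _ b (coef_nonneg M2 M3) hb0)
    · have hb1 : ∀ j, (1:ℝ) ≤ b j := by
        intro j
        have := (Finset.sum_eq_zero_iff_of_nonneg
          (fun j _ => le_max_left 0 (1 - b j))).mp hs j (Finset.mem_univ j)
        have h' : 1 - b j ≤ 0 := by
          by_contra h'
          push_neg at h'
          rw [max_eq_right h'.le] at this
          linarith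
        linarith
      calc (M2 : ℝ) * min M1 M3 ≤ (M2 : ℝ) * M3 := hmin2
        _ = ∑ j : Fin (min M2 M3), (2 * (j : ℝ) + 1 + |(M2 : ℝ) - M3|) := (coef_total M2 M3).symm
        _ ≤ ∑ j : Fin (min M2 M3), (2 * (j : ℝ) + 1 + |(M2 : ℝ) - M3|) * b j :=
          key _ _ b (coef_nonneg M2 M3) hb1
        _ ≤ _ := le_add_of_nonneg_left (nn _ _ a (coef_nonneg M1 M2) ha0)
  have hbdd : BddBelow S := ⟨_, hlb⟩
  apply le_antisymm
  · rcases le_total M1 M3 with h | h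
    · have : (M2 : ℝ) * min M1 M3 = (M1 : ℝ) * M2 := by
        rw [min_eq_left h]; ring
      rw [this]; exact csInf_le hbdd hm1
    · have : (M2 : ℝ) * min M1 M3 = (M2 : ℝ) * M3 := by
        rw [min_eq_right h]
      rw [this]; exact csInf_le hbdd hm2
  · exact le_csInf ⟨_, hm1⟩ hlb
end

section
/- In the (M₁,1,M₃) case, d^{DDF}(r) = inf{ M₁·α₁ + M₃·α₂ : α₁, α₂ ≥ 0, r ≥ (1−α₁)⁺(1−α₂)⁺ / ((1−α₁)⁺+(1−α₂)⁺) } equals min(M₁,M₃)·(1−2r)/(1−r) for 0 ≤ r ≤ 1/2, and equals 0 for 1/2 < r ≤ 1, where the constraint is interpreted as r ≥ S₁S₂/(S₁+S₂) with S_i = (1−α_i)⁺ when S₁+S₂ > 0, and is vacuously satisfied when S₁ = 0 or S₂ = 0. -/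
/-- DMT of the `(M₁,1,M₃)` half-duplex multi-hop relay channel:
`d^{DDF}(r) = min(M₁,M₃)·(1-2r)/(1-r)` for `0 ≤ r ≤ 1/2`, and `0` for `1/2 < r ≤ 1`.
The constraint is `r ≥ S₁S₂/(S₁+S₂)` when `S₁+S₂ > 0`, and vacuously satisfied
when `S₁ = 0` or `S₂ = 0`. -/
theorem stmt7 (M1 M3 : ℕ) (h1 : 0 < M1) (h3 : 0 < M3) (r : ℝ)
    (hr0 : 0 ≤ r) (hr1 : r ≤ 1) :
    sInf {v : ℝ | ∃ a1 a2 : ℝ, 0 ≤ a1 ∧ 0 ≤ a2 ∧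
        (max 0 (1 - a1) = 0 ∨ max 0 (1 - a2) = 0 ∨
          (0 < max 0 (1 - a1) + max 0 (1 - a2) ∧
            r ≥ max 0 (1 - a1) * max 0 (1 - a2) / (max 0 (1 - a1) + max 0 (1 - a2)))) ∧
        v = (M1 : ℝ) * a1 + (M3 : ℝ) * a2}
      = if r ≤ 1 / 2 then (min M1 M3 : ℕ) * (1 - 2 * r) / (1 - r) else 0 := by
  split_ifs with hhalf
  · -- case r ≤ 1/2
    have h1r : (0:ℝ) < 1 - r := by linarith
    have hd0 : (0:ℝ) ≤ (1 - 2*r) / (1 - r) :=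
      div_nonneg (by linarith) h1r.le
    have hd1 : (1 - 2*r) / (1 - r) ≤ 1 := by
      rw [div_le_one h1r]; linarith
    apply IsLeast.csInf_eq
    constructor
    · -- membership: pick the cheaper side
      have hfeas : ∀ a : ℝ, a = (1 - 2*r)/(1-r) →
          (max 0 (1 - a) = 0 ∨ max 0 (1 - (0:ℝ)) = 0 ∨
            (0 < max 0 (1 - a) + max 0 (1 - (0:ℝ)) ∧
              r ≥ max 0 (1 - a) * max 0 (1 - (0:ℝ)) / (max 0 (1 - a) + max 0 (1 - (0:ℝ))))) := by
        intro a ha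
        have e1 : 1 - a = r/(1-r) := by
          rw [ha]; field_simp; ring
        have hrn : (0:ℝ) ≤ r/(1-r) := div_nonneg hr0 h1r.le
        rw [e1, max_eq_right hrn, max_eq_right (by norm_num : (0:ℝ) ≤ 1 - 0)]
        right; right
        constructor
        · positivity
        · have e2 : r/(1-r) * (1 - 0) / (r/(1-r) + (1 - 0)) = r := by
            have : r/(1-r) + (1 - 0) = 1/(1-r) := by field_simp; ring
            rw [this]
            field_simp; ring
          rw [e2]
      rcases le_total M1 M3 with hM | hM
      · have hmin : min M1 M3 = M1 := min_eq_left hM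
        refine ⟨(1 - 2*r)/(1-r), 0, hd0, le_refl 0, hfeas _ rfl, ?_⟩
        rw [hmin]; ring
      · have hmin : min M1 M3 = M3 := min_eq_right hM
        -- symmetric point: a1 = 0, a2 = (1-2r)/(1-r)
        refine ⟨0, (1 - 2*r)/(1-r), le_refl 0, hd0, ?_, ?_⟩
        · have e1 : 1 - (1 - 2*r)/(1-r) = r/(1-r) := by field_simp; ring
          have hrn : (0:ℝ) ≤ r/(1-r) := div_nonneg hr0 h1r.le
          rw [e1, max_eq_right hrn, max_eq_right (by norm_num : (0:ℝ) ≤ 1 - 0)]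
          right; right
          refine ⟨by positivity, ?_⟩
          have e2 : (1 - 0) * (r/(1-r)) / ((1 - 0) + r/(1-r)) = r := by
            have h : (1 - 0) + r/(1-r) = 1/(1-r) := by field_simp; ring
            rw [h]; field_simp; ring
          rw [e2]
        · rw [hmin]; ring
    · rintro v ⟨a1, a2, ha1, ha2, hc, rfl⟩
      have key : (1 - 2*r)/(1-r) ≤ a1 + a2 := by
        rcases le_or_gt 1 a1 with h | hlt1
        · linarith
        rcases le_or_gt 1 a2 with h | hlt2
        · linarith
        have e1 : max 0 (1 - a1) = 1 - a1 := max_eq_right (by linarith)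
        have e2 : max 0 (1 - a2) = 1 - a2 := max_eq_right (by linarith)
        rw [e1, e2] at hc
        rcases hc with h | h | ⟨hs, hr⟩
        · linarith
        · linarith
        · have hprod : (1 - a1) * (1 - a2) ≤ r * ((1 - a1) + (1 - a2)) := by
            rw [ge_iff_le, div_le_iff₀ hs] at hr
            linarith
          rw [div_le_iff₀ h1r]
          nlinarith [mul_nonneg ha1 ha2]
      have hm1 : ((min M1 M3 : ℕ) : ℝ) ≤ (M1 : ℝ) := by
        exact_mod_cast Nat.cast_le.mpr (min_le_left M1 M3)
      have hm3 : ((min M1 M3 : ℕ) : ℝ) ≤ (M3 : ℝ) := by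
        exact_mod_cast Nat.cast_le.mpr (min_le_right M1 M3)
      have hm0 : (0:ℝ) ≤ ((min M1 M3 : ℕ) : ℝ) := by positivity
      rw [mul_div_assoc]
      nlinarith [mul_nonneg ha1 ha2]
  · -- case r > 1/2
    push_neg at hhalf
    apply IsLeast.csInf_eq
    constructor
    · refine ⟨0, 0, le_refl 0, le_refl 0, ?_, by ring⟩
      right; right
      norm_num
      linarith
    · rintro v ⟨a1, a2, ha1, ha2, _, rfl⟩
      positivity
end

section
/- Let d₁ and d₂ be continuous, strictly decreasing functions on [0, m₁] and [0, m₂] respectively with d₁(m₁) = d₂(m₂) = 0 and d₁(0), d₂(0) > 0. For each r with 0 < r < m₁m₂/(m₁+m₂) there exists a unique a = a(r) ∈ (r/m₁, 1−r/m₂) such that d₁(r/a) = d₂(r/(1−a)). -/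
/-!
On `[r/m₁, 1 - r/m₂]` the map `a ↦ d₁(r/a)` is strictly increasing and `a ↦ d₂(r/(1-a))` is
strictly decreasing. At the left endpoint the first one is `d₁(m₁) = 0` while the second is positive,
and at the right endpoint the roles are swapped, so by the intermediate value theorem the two graphs
cross, and by strict monotonicity of their difference they cross exactly once. The condition on `r`
is exactly `r/m₁ < 1 - r/m₂`, i.e. that the interval is nondegenerate.
-/

open Set

section Crossing

variable {α δ : Type*} [ConditionallyCompleteLinearOrder α] [TopologicalSpace α] [OrderTopology α]
  [DenselyOrdered α] {a b : α}

theorem StrictMonoOn.existsUnique_mem_Ioo_eq [LinearOrder δ] [TopologicalSpace δ]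
    [OrderClosedTopology δ] {f : α → δ} {c : δ} (hab : a ≤ b) (hf : StrictMonoOn f (Icc a b))
    (hfc : ContinuousOn f (Icc a b)) (hc : c ∈ Ioo (f a) (f b)) :
    ∃! x, x ∈ Ioo a b ∧ f x = c := by
  obtain ⟨x, hx, rfl⟩ := intermediate_value_Ioo hab hfc hc
  exact ⟨x, ⟨hx, rfl⟩, fun y ⟨hy, hyx⟩ ↦
    hf.injOn (Ioo_subset_Icc_self hy) (Ioo_subset_Icc_self hx) hyx⟩

theorem StrictMonoOn.existsUnique_mem_Ioo_eq_of_strictAntiOn [AddCommGroup δ] [LinearOrder δ]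
    [IsOrderedAddMonoid δ] [TopologicalSpace δ] [OrderTopology δ] {f g : α → δ} (hab : a ≤ b)
    (hf : StrictMonoOn f (Icc a b)) (hg : StrictAntiOn g (Icc a b))
    (hfc : ContinuousOn f (Icc a b)) (hgc : ContinuousOn g (Icc a b))
    (ha : f a < g a) (hb : g b < f b) :
    ∃! x, x ∈ Ioo a b ∧ f x = g x := by
  have hmono : StrictMonoOn (f - g) (Icc a b) := fun x hx y hy hxy ↦
    sub_lt_sub (hf hx hy hxy) (hg hx hy hxy)
  simpa only [Pi.sub_apply, sub_eq_zero] using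
    hmono.existsUnique_mem_Ioo_eq hab (hfc.sub hgc) ⟨sub_neg.2 ha, sub_pos.2 hb⟩

end Crossing

section HopExponent

variable {d : ℝ → ℝ} {m r : ℝ}

theorem mapsTo_div_Ici_Icc (hr : 0 < r) (hm : 0 < m) : MapsTo (r / ·) (Ici (r / m)) (Icc 0 m) := by
  intro a ha
  have ha0 : 0 < a := (div_pos hr hm).trans_le ha
  refine ⟨by positivity, (div_le_iff₀ ha0).2 ?_⟩
  rw [mem_Ici, div_le_iff₀ hm] at ha
  linarith

theorem StrictAntiOn.strictMonoOn_comp_div (hd : StrictAntiOn d (Icc 0 m)) (hr : 0 < r)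
    (hm : 0 < m) : StrictMonoOn (fun a ↦ d (r / a)) (Ici (r / m)) :=
  hd.comp (fun _ hx _ _ hxy ↦ div_lt_div_of_pos_left hr
    ((div_pos hr hm).trans_le hx) hxy) (mapsTo_div_Ici_Icc hr hm)

theorem ContinuousOn.comp_div (hd : ContinuousOn d (Icc 0 m)) (hr : 0 < r) (hm : 0 < m) :
    ContinuousOn (fun a ↦ d (r / a)) (Ici (r / m)) :=
  hd.comp (continuousOn_const.div continuousOn_id fun _ ha ↦ ((div_pos hr hm).trans_le ha).ne')
    (mapsTo_div_Ici_Icc hr hm)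

theorem StrictAntiOn.comp_div_pos (hd : StrictAntiOn d (Icc 0 m)) (he : d m = 0) (hr : 0 < r)
    (hm : 0 < m) {a : ℝ} (ha : r / m < a) : 0 < d (r / a) := by
  simpa [div_div_cancel₀ hr.ne', he] using
    hd.strictMonoOn_comp_div hr hm self_mem_Ici ha.le ha

end HopExponent

theorem stmt13_general (m1 m2 : ℝ) (hm1 : 0 < m1) (hm2 : 0 < m2)
    (d1 d2 : ℝ → ℝ)
    (hc1 : ContinuousOn d1 (Set.Icc 0 m1)) (hc2 : ContinuousOn d2 (Set.Icc 0 m2))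
    (ha1 : StrictAntiOn d1 (Set.Icc 0 m1)) (ha2 : StrictAntiOn d2 (Set.Icc 0 m2))
    (he1 : d1 m1 = 0) (he2 : d2 m2 = 0)
    (r : ℝ) (hr0 : 0 < r) (hr : r < m1 * m2 / (m1 + m2)) :
    ∃! a : ℝ, a ∈ Set.Ioo (r / m1) (1 - r / m2) ∧ d1 (r / a) = d2 (r / (1 - a)) := by
  have hAB : r / m1 < 1 - r / m2 := by
    rw [lt_div_iff₀ (by positivity)] at hr
    rw [lt_sub_iff_add_lt, div_add_div _ _ hm1.ne' hm2.ne', div_lt_one (by positivity)]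
    linarith
  have hleft : Icc (r / m1) (1 - r / m2) ⊆ Ici (r / m1) := Icc_subset_Ici_self
  have hright : MapsTo (1 - ·) (Icc (r / m1) (1 - r / m2)) (Ici (r / m2)) := fun a ha ↦ by
    simp only [mem_Ici]; linarith [ha.2]
  refine StrictMonoOn.existsUnique_mem_Ioo_eq_of_strictAntiOn hAB.le
    ((ha1.strictMonoOn_comp_div hr0 hm1).mono hleft)
    ((ha2.strictMonoOn_comp_div hr0 hm2).comp_strictAntiOn
      (fun _ _ _ _ hxy ↦ sub_lt_sub_left hxy 1) hright)
    ((hc1.comp_div hr0 hm1).mono hleft)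
    ((hc2.comp_div hr0 hm2).comp (continuousOn_const.sub continuousOn_id) hright) ?_ ?_
  · simpa [div_div_cancel₀ hr0.ne', he1] using ha2.comp_div_pos he2 hr0 hm2 (by linarith)
  · simpa [div_div_cancel₀ hr0.ne', he2] using ha1.comp_div_pos he1 hr0 hm1 hAB

/-- Well-definedness of the vDF optimal time split: for continuous strictly decreasing
per-hop DMT curves `d₁, d₂` vanishing at their maximal multiplexing gains `m₁, m₂`,
every `r ∈ (0, m₁m₂/(m₁+m₂))` admits a unique `a ∈ (r/m₁, 1 - r/m₂)` with
`d₁(r/a) = d₂(r/(1-a))`. -/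
theorem stmt13 (m1 m2 : ℝ) (hm1 : 0 < m1) (hm2 : 0 < m2)
    (d1 d2 : ℝ → ℝ)
    (hc1 : ContinuousOn d1 (Set.Icc 0 m1)) (hc2 : ContinuousOn d2 (Set.Icc 0 m2))
    (ha1 : StrictAntiOn d1 (Set.Icc 0 m1)) (ha2 : StrictAntiOn d2 (Set.Icc 0 m2))
    (he1 : d1 m1 = 0) (he2 : d2 m2 = 0)
    (hp1 : 0 < d1 0) (hp2 : 0 < d2 0)
    (r : ℝ) (hr0 : 0 < r) (hr : r < m1 * m2 / (m1 + m2)) :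
    ∃! a : ℝ, a ∈ Set.Ioo (r / m1) (1 - r / m2) ∧ d1 (r / a) = d2 (r / (1 - a)) :=
  stmt13_general m1 m2 hm1 hm2 d1 d2 hc1 hc2 ha1 ha2 he1 he2 r hr0 hr
end
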